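/- arXiv:2511.19303 — 5 statements merged into one kernel-verified Lean document; each statement's English description precedes it below -/
import Mathlib

section
/- Let ω: ℝ → ℂ be a function with ω(0) = 0. Then for every nonzero integer n, 2·∑_{d ≥ 1, d ∣ n} (ω(d) − ω(n/d)) = 0, while for n = 0 (interpreting every positive integer as a divisor of 0 and n/d = 0) the analogous sum equals 2·∑_{d ≥ 1} (ω(d) − ω(0)); in particular, if additionally ∑_{n ∈ ℤ} ω(n) = 1 and ω is even, then δ(n=0) = 2·∑_{1 ≤ d ∣ n} (ω(d) − ω(n/d)) for all n ∈ ℤ. -/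
open scoped BigOperators

theorem stmt0 (ω : ℝ → ℂ) (hω0 : ω 0 = 0) :
    (∀ n : ℤ, n ≠ 0 →
      2 * ∑ d ∈ n.natAbs.divisors, (ω (d : ℝ) - ω ((n.natAbs / d : ℕ) : ℝ)) = 0) ∧
    ((∀ x : ℝ, ω (-x) = ω x) → Summable (fun n : ℤ => ω n) →
      (∑' n : ℤ, ω n) = 1 →
      ∀ n : ℤ,
        (if n = 0 then (1 : ℂ) else 0) =
          2 * (if n = 0 then ∑' d : ℕ+, (ω ((d : ℕ) : ℝ) - ω 0)
               else ∑ d ∈ n.natAbs.divisors, (ω (d : ℝ) - ω ((n.natAbs / d : ℕ) : ℝ)))) := by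
  have key : ∀ n : ℤ, n ≠ 0 →
      2 * ∑ d ∈ n.natAbs.divisors, (ω (d : ℝ) - ω ((n.natAbs / d : ℕ) : ℝ)) = 0 := by
    intro n hn
    rw [Finset.sum_sub_distrib, Nat.sum_div_divisors n.natAbs (fun d => ω (d : ℝ)),
      sub_self, mul_zero]
  refine ⟨key, ?_⟩
  intro heven hsum htsum n
  by_cases h : n = 0
  · simp only [h, if_true, hω0, sub_zero]
    -- ∑' d:ℕ+, ω d = ∑' n:ℕ, ω n
    have hinj : Function.Injective (fun d : ℕ+ => (d : ℕ)) := fun a b h => PNat.coe_injective h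
    have h1 : ∑' d : ℕ+, ω ((d : ℕ) : ℝ) = ∑' m : ℕ, ω (m : ℝ) := by
      refine Function.Injective.tsum_eq (f := fun m : ℕ => ω (m : ℝ)) hinj ?_
      intro m hm
      rcases Nat.eq_zero_or_pos m with rfl | hp
      · simp [hω0] at hm
      · exact ⟨⟨m, hp⟩, rfl⟩
    have hN : Summable (fun m : ℕ => ω (m : ℝ)) := by
      have := hsum.comp_injective (fun a b hh => Int.ofNat.inj hh : Function.Injective (Int.ofNat))
      exact this.congr (fun m => by simp)
    have h2 : ∑' m : ℕ, (ω ((m : ℤ) : ℝ) + ω ((-(m : ℤ) : ℤ) : ℝ)) = (∑' k : ℤ, ω k) + ω ((0:ℤ):ℝ) :=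
      tsum_nat_add_neg hsum
    have h3 : ∀ m : ℕ, ω ((m : ℤ) : ℝ) + ω ((-(m : ℤ) : ℤ) : ℝ) = 2 * ω (m : ℝ) := by
      intro m
      push_cast
      rw [heven]
      ring
    rw [tsum_congr h3, htsum] at h2
    simp only [Int.cast_zero, hω0, add_zero] at h2
    rw [tsum_mul_left] at h2
    rw [h1, ← h2]
  · simp only [h, if_false]
    exact (key n h).symm
end

section
/- Suppose C = U₀⁻¹·diag(1, β)·V₀⁻¹ with U₀ ∈ GL₂(ℤ), V₀ ∈ SL₂(ℤ), and β ≥ 1 an integer. Then the set of all pairs (U, V) ∈ GL₂(ℤ) × SL₂(ℤ) such that C = U⁻¹·diag(1, β)·V⁻¹ is exactly the set of pairs (γ'·U₀, V₀·γ) where γ ∈ Γ⁰(β) and γ' = diag(1, β)·γ⁻¹·diag(1, β)⁻¹. -/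
open Matrix

local notation "M2" => Matrix (Fin 2) (Fin 2) ℤ

theorem stmt2 (β : ℤ) (hβ : 1 ≤ β)
    (U₀ : Matrix.GeneralLinearGroup (Fin 2) ℤ)
    (V₀ : Matrix.SpecialLinearGroup (Fin 2) ℤ)
    (C : Matrix (Fin 2) (Fin 2) ℤ)
    (hC : C = (↑(U₀⁻¹) : Matrix (Fin 2) (Fin 2) ℤ) * Matrix.diagonal ![1, β] *
        (↑(V₀⁻¹) : Matrix (Fin 2) (Fin 2) ℤ)) :
    ∀ (U : Matrix.GeneralLinearGroup (Fin 2) ℤ)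
      (V : Matrix.SpecialLinearGroup (Fin 2) ℤ),
      (C = (↑(U⁻¹) : Matrix (Fin 2) (Fin 2) ℤ) * Matrix.diagonal ![1, β] *
          (↑(V⁻¹) : Matrix (Fin 2) (Fin 2) ℤ)) ↔
      ∃ γ : Matrix.SpecialLinearGroup (Fin 2) ℤ,
        β ∣ (γ : Matrix (Fin 2) (Fin 2) ℤ) 0 1 ∧
        V = V₀ * γ ∧
        ((↑U : Matrix (Fin 2) (Fin 2) ℤ) * (↑(U₀⁻¹) : Matrix (Fin 2) (Fin 2) ℤ)) *
            Matrix.diagonal ![1, β] =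
          Matrix.diagonal ![1, β] * (↑(γ⁻¹) : Matrix (Fin 2) (Fin 2) ℤ) := by
  intro U V
  set D : M2 := Matrix.diagonal ![1, β] with hD
  have hV0 : (↑(V₀⁻¹) : M2) * (↑V₀ : M2) = 1 := by
    rw [← Matrix.SpecialLinearGroup.coe_mul, inv_mul_cancel,
      Matrix.SpecialLinearGroup.coe_one]
  have hU : (↑U : M2) * (↑(U⁻¹) : M2) = 1 := U.mul_inv
  have hU' : (↑(U⁻¹) : M2) * (↑U : M2) = 1 := U.inv_mul
  have hco : (↑((V₀⁻¹ * V)⁻¹) : M2) = (↑(V⁻¹) : M2) * (↑V₀ : M2) := by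
    rw [_root_.mul_inv_rev, inv_inv, Matrix.SpecialLinearGroup.coe_mul]
  constructor
  · intro h
    have h1 : (↑(U₀⁻¹) : M2) * D * (↑(V₀⁻¹) : M2)
        = (↑(U⁻¹) : M2) * D * (↑(V⁻¹) : M2) := by rw [← hC, h]
    have key : ((↑U : M2) * (↑(U₀⁻¹) : M2)) * D = D * (↑((V₀⁻¹ * V)⁻¹) : M2) := by
      rw [hco]
      calc ((↑U : M2) * (↑(U₀⁻¹) : M2)) * D
          = (↑U : M2) * ((↑(U₀⁻¹) : M2) * D * (↑(V₀⁻¹) : M2)) * (↑V₀ : M2) := by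
            simp only [mul_assoc, hV0, mul_one]
        _ = (↑U : M2) * ((↑(U⁻¹) : M2) * D * (↑(V⁻¹) : M2)) * (↑V₀ : M2) := by
            rw [h1]
        _ = D * ((↑(V⁻¹) : M2) * (↑V₀ : M2)) := by
            simp only [← mul_assoc, hU, one_mul]
    refine ⟨V₀⁻¹ * V, ?_, by group, key⟩
    have e01 := congrFun (congrFun key 0) 1
    have hadj : (↑((V₀⁻¹ * V)⁻¹) : M2) 0 1 = -(↑(V₀⁻¹ * V) : M2) 0 1 := by
      rw [Matrix.SpecialLinearGroup.coe_inv, Matrix.adjugate_fin_two]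
      simp
    have l : ((↑U : M2) * (↑(U₀⁻¹) : M2) * D) 0 1
        = (((↑U : M2) * (↑(U₀⁻¹) : M2)) 0 1) * β := by
      rw [Matrix.mul_apply, Fin.sum_univ_two]
      simp [hD, Matrix.diagonal_apply]
    have r : (D * (↑((V₀⁻¹ * V)⁻¹) : M2)) 0 1 = (↑((V₀⁻¹ * V)⁻¹) : M2) 0 1 := by
      rw [Matrix.mul_apply, Fin.sum_univ_two]
      simp [hD, Matrix.diagonal_apply]
    rw [l, r, hadj] at e01
    exact ⟨-(((↑U : M2) * (↑(U₀⁻¹) : M2)) 0 1), by linarith⟩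
  · rintro ⟨γ, hdvd, rfl, hkey⟩
    rw [hC]
    have h3 : (↑((V₀ * γ)⁻¹) : M2) = (↑(γ⁻¹) : M2) * (↑(V₀⁻¹) : M2) := by
      rw [_root_.mul_inv_rev, Matrix.SpecialLinearGroup.coe_mul]
    rw [h3]
    have h4 := congrArg (fun X : M2 => (↑(U⁻¹) : M2) * X) hkey
    beta_reduce at h4
    rw [← mul_assoc, ← mul_assoc, hU', one_mul, ← mul_assoc] at h4
    rw [h4, mul_assoc]
end

section
/- A complete set of coset representatives for SL₂(ℤ)/Γ⁰(β) is given by matrices γ_{p,q} = [[*, p],[*, q]] where q runs over positive divisors of β, p runs over residues modulo β/q with gcd(p, q) = 1, and the left column is chosen so that det(γ_{p,q}) = 1. That is: (i) two such matrices γ_{p₁,q₁} and γ_{p₂,q₂} lie in the same left coset of Γ⁰(β) if and only if q₁ = q₂ and p₁ ≡ p₂ (mod β/q₁); and (ii) every element of SL₂(ℤ) lies in some coset γ_{p,q}·Γ⁰(β). -/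
open Matrix

-- lift a residue coprime to d to one coprime to n, where d ∣ n
lemma lift_coprime (n d : ℕ) (hn : n ≠ 0) (hd : d ∣ n) (x : ℤ) (hx : IsCoprime x (d : ℤ)) :
    ∃ y : ℤ, IsCoprime y (n : ℤ) ∧ (d : ℤ) ∣ x - y := by
  have : NeZero n := ⟨hn⟩
  obtain ⟨u, v, huv⟩ := hx
  have hux : (u : ZMod d) * (x : ZMod d) = 1 := by
    have := congrArg (fun t : ℤ => (t : ZMod d)) huv
    push_cast at this
    simpa using this
  have hxu : IsUnit ((x : ZMod d)) := IsUnit.of_mul_eq_one _ (by rw [mul_comm]; exact hux)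
  obtain ⟨z, hz⟩ := ZMod.unitsMap_surjective hd hxu.unit
  refine ⟨(((z : ZMod n).val : ℤ)), ?_, ?_⟩
  · rw [Int.isCoprime_iff_gcd_eq_one]
    exact_mod_cast ZMod.val_coe_unit_coprime z
  · rw [← ZMod.intCast_zmod_eq_zero_iff_dvd]
    push_cast
    have h1 : (((z : ZMod n).val : ZMod d)) = ZMod.castHom hd (ZMod d) (z : ZMod n) := by
      rw [ZMod.natCast_val]
      rfl
    have h2 : ZMod.castHom hd (ZMod d) (z : ZMod n) = (x : ZMod d) := by
      have := congrArg (fun w : (ZMod d)ˣ => (w : ZMod d)) hz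
      simpa [ZMod.unitsMap_def] using this
    rw [h1, h2, sub_self]

lemma exists_rep (m n x : ℤ) (hn : n ≠ 0) (h : IsCoprime x ((Int.gcd m n : ℕ) : ℤ)) :
    ∃ p : ℤ, m ∣ (x - p) ∧ IsCoprime p n := by
  have hdvd : Int.gcd m n ∣ n.natAbs := by
    rw [← Int.natCast_dvd_natCast]
    exact (Int.natAbs_dvd_natAbs.mpr (Int.gcd_dvd_right m n)).natCast
  obtain ⟨y, hy, hgy⟩ := lift_coprime n.natAbs (Int.gcd m n)
    (by simpa using hn) hdvd x h
  have hy' : IsCoprime y n := by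
    rw [Int.isCoprime_iff_gcd_eq_one] at hy ⊢
    simpa [Int.gcd, Int.natAbs_abs] using hy
  obtain ⟨z, hz⟩ := hgy
  have hg : ((Int.gcd m n : ℕ) : ℤ) = m * Int.gcdA m n + n * Int.gcdB m n := Int.gcd_eq_gcd_ab m n
  refine ⟨y + n * (Int.gcdB m n * z), ⟨Int.gcdA m n * z, by linear_combination hz + z * hg⟩, ?_⟩
  exact hy'.add_mul_left_left _

lemma inv_mul_entry (A B : Matrix.SpecialLinearGroup (Fin 2) ℤ) :
    ((A⁻¹ * B : Matrix.SpecialLinearGroup (Fin 2) ℤ) : Matrix (Fin 2) (Fin 2) ℤ) 0 1 =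
      (A : Matrix (Fin 2) (Fin 2) ℤ) 1 1 * (B : Matrix (Fin 2) (Fin 2) ℤ) 0 1 -
      (A : Matrix (Fin 2) (Fin 2) ℤ) 0 1 * (B : Matrix (Fin 2) (Fin 2) ℤ) 1 1 := by
  simp [Matrix.SpecialLinearGroup.coe_mul, Matrix.SpecialLinearGroup.coe_inv,
    Matrix.adjugate_fin_two, Matrix.mul_apply, Fin.sum_univ_two]
  ring

theorem stmt3 (β : ℤ) (hβ : 1 ≤ β) :
    (∀ (γ₁ γ₂ : Matrix.SpecialLinearGroup (Fin 2) ℤ) (p₁ q₁ p₂ q₂ : ℤ),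
      (γ₁ : Matrix (Fin 2) (Fin 2) ℤ) 0 1 = p₁ →
      (γ₁ : Matrix (Fin 2) (Fin 2) ℤ) 1 1 = q₁ →
      (γ₂ : Matrix (Fin 2) (Fin 2) ℤ) 0 1 = p₂ →
      (γ₂ : Matrix (Fin 2) (Fin 2) ℤ) 1 1 = q₂ →
      0 < q₁ → q₁ ∣ β → 0 < q₂ → q₂ ∣ β →
      IsCoprime p₁ q₁ → IsCoprime p₂ q₂ →
      ((β ∣ ((γ₂⁻¹ * γ₁ : Matrix.SpecialLinearGroup (Fin 2) ℤ) :
          Matrix (Fin 2) (Fin 2) ℤ) 0 1) ↔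
        (q₁ = q₂ ∧ (β / q₁) ∣ (p₁ - p₂)))) ∧
    (∀ g : Matrix.SpecialLinearGroup (Fin 2) ℤ,
      ∃ (γ : Matrix.SpecialLinearGroup (Fin 2) ℤ) (p q : ℤ),
        (γ : Matrix (Fin 2) (Fin 2) ℤ) 0 1 = p ∧
        (γ : Matrix (Fin 2) (Fin 2) ℤ) 1 1 = q ∧
        0 < q ∧ q ∣ β ∧ IsCoprime p q ∧
        β ∣ ((γ⁻¹ * g : Matrix.SpecialLinearGroup (Fin 2) ℤ) :
          Matrix (Fin 2) (Fin 2) ℤ) 0 1) := by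
  have hβ0 : β ≠ 0 := by omega
  constructor
  · intro γ₁ γ₂ p₁ q₁ p₂ q₂ hb1 hd1 hb2 hd2 hq1 hq1β hq2 hq2β hcop1 hcop2
    rw [inv_mul_entry, hb1, hd1, hb2, hd2]
    have hβ' : β = q₁ * (β / q₁) := (Int.mul_ediv_cancel' hq1β).symm
    constructor
    · intro h
      obtain ⟨w, hw⟩ := hq1β.trans h
      obtain ⟨w', hw'⟩ := hq2β.trans h
      have h1 : q₁ ∣ q₂ * p₁ := ⟨w + p₂, by linear_combination hw⟩
      have h2 : q₂ ∣ p₂ * q₁ := ⟨p₁ - w', by linear_combination -hw'⟩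
      have hq12 : q₁ ∣ q₂ := (hcop1.symm).dvd_of_dvd_mul_right h1
      have hq21 : q₂ ∣ q₁ := (hcop2.symm).dvd_of_dvd_mul_left h2
      have heq : q₁ = q₂ := Int.dvd_antisymm hq1.le hq2.le hq12 hq21
      refine ⟨heq, ?_⟩
      have hβd : q₁ * (β / q₁) ∣ q₁ * (p₁ - p₂) := by
        rw [← hβ']
        have : q₁ * (p₁ - p₂) = q₂ * p₁ - p₂ * q₁ := by rw [← heq]; ring
        rw [this]; exact h
      exact (mul_dvd_mul_iff_left hq1.ne').mp hβd
    · rintro ⟨heq, k, hk⟩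
      exact ⟨k, by linear_combination q₁ * hk - k * hβ' - p₁ * heq⟩
  · intro g
    set a := (g : Matrix (Fin 2) (Fin 2) ℤ) 0 0 with ha
    set b := (g : Matrix (Fin 2) (Fin 2) ℤ) 0 1 with hb
    set c := (g : Matrix (Fin 2) (Fin 2) ℤ) 1 0 with hc
    set d := (g : Matrix (Fin 2) (Fin 2) ℤ) 1 1 with hd
    have hdet : a * d - b * c = 1 := by
      have := g.2
      rw [Matrix.det_fin_two] at this
      exact this
    have hbd : IsCoprime b d := ⟨-c, a, by linarith⟩
    set q : ℤ := ((Int.gcd d β : ℕ) : ℤ) with hq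
    have hgcd0 : 0 < Int.gcd d β := Nat.pos_of_ne_zero (by simp [Int.gcd_eq_zero_iff, hβ0])
    have hq0 : 0 < q := by rw [hq]; exact Int.natCast_pos.mpr hgcd0
    have hqd : q ∣ d := Int.gcd_dvd_left _ _
    have hqβ : q ∣ β := Int.gcd_dvd_right _ _
    set β' : ℤ := β / q with hβ'def
    set d' : ℤ := d / q with hd'def
    have hβq : β = q * β' := (Int.mul_ediv_cancel' hqβ).symm
    have hdq : d = q * d' := (Int.mul_ediv_cancel' hqd).symm
    have hcop' : IsCoprime d' β' := by
      rw [Int.isCoprime_iff_gcd_eq_one]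
      exact Int.gcd_div_gcd_div_gcd hgcd0
    obtain ⟨u, v, huv⟩ := hcop'
    set p₀ : ℤ := u * b with hp₀
    have hkey : β' ∣ d' * p₀ - b := ⟨-(v * b), by linear_combination b * huv⟩
    -- p₀ is coprime to gcd β' q
    have hcop₀ : IsCoprime p₀ ((Int.gcd β' q : ℕ) : ℤ) := by
      rw [Int.isCoprime_iff_gcd_eq_one]
      by_contra hne
      set f : ℤ := ((Int.gcd p₀ ((Int.gcd β' q : ℕ) : ℤ) : ℕ) : ℤ) with hf
      have hfp : f ∣ p₀ := Int.gcd_dvd_left _ _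
      have hfe : f ∣ ((Int.gcd β' q : ℕ) : ℤ) := Int.gcd_dvd_right _ _
      have hfβ' : f ∣ β' := hfe.trans (Int.gcd_dvd_left _ _)
      have hfq : f ∣ q := hfe.trans (Int.gcd_dvd_right _ _)
      have hfb : f ∣ b := by
        have h1 : f ∣ d' * p₀ := hfp.mul_left _
        have h2 : f ∣ d' * p₀ - b := hfβ'.trans hkey
        have := dvd_sub h1 h2
        simpa using this
      have hfd : f ∣ d := hfq.trans hqd
      have : IsUnit f := hbd.isUnit_of_dvd' hfb hfd
      rw [Int.isUnit_iff] at this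
      rcases this with h1 | h1
      · exact hne (by rw [hf] at h1; exact_mod_cast h1)
      · have : (0:ℤ) ≤ f := Int.natCast_nonneg _
        omega
    obtain ⟨p, hpp₀, hpq⟩ := exists_rep β' q p₀ hq0.ne' hcop₀
    obtain ⟨x, y, hxy⟩ := hpq
    refine ⟨⟨!![y, p; -x, q], by simp [Matrix.det_fin_two_of]; linarith⟩, p, q, rfl, rfl,
      hq0, hqβ, ⟨x, y, hxy⟩, ?_⟩
    erw [inv_mul_entry]
    show β ∣ q * b - p * d
    obtain ⟨s, hs⟩ := hkey
    obtain ⟨t, ht⟩ := hpp₀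
    refine ⟨d' * t - s, ?_⟩
    rw [hβq]
    linear_combination (-q) * hs + (q * d') * ht + (-p) * hdq
end

section
/- Suppose C = [[c₁,c₂],[c₃,c₄]] ∈ M₂(ℤ) satisfies C = U⁻¹·diag(1, β)·V⁻¹ with U ∈ GL₂(ℤ), V ∈ SL₂(ℤ), β ≥ 1. If V ∈ γ_{p,q}·Γ⁰(β) (with γ_{p,q} = [[*,p],[*,q]] as in the coset decomposition of SL₂(ℤ)/Γ⁰(β)), then q = gcd(c₁, c₃), and for any r, s ∈ ℤ with (c₁/q)·r + (c₃/q)·s = 1, one has −p ≡ c₂·r + c₄·s (mod β/q). -/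
open Matrix

theorem stmt4 (β : ℤ) (hβ : 1 ≤ β) (C : Matrix (Fin 2) (Fin 2) ℤ)
    (U : Matrix.GeneralLinearGroup (Fin 2) ℤ)
    (V γ₀ : Matrix.SpecialLinearGroup (Fin 2) ℤ) (p q : ℤ)
    (hsmith : (↑U : Matrix (Fin 2) (Fin 2) ℤ) * C * (↑V : Matrix (Fin 2) (Fin 2) ℤ) =
      Matrix.diagonal ![1, β])
    (hγ₀p : (γ₀ : Matrix (Fin 2) (Fin 2) ℤ) 0 1 = p)
    (hγ₀q : (γ₀ : Matrix (Fin 2) (Fin 2) ℤ) 1 1 = q)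
    (hq : 0 < q) (hqβ : q ∣ β) (hpq : IsCoprime p q)
    (hcoset : β ∣ ((γ₀⁻¹ * V : Matrix.SpecialLinearGroup (Fin 2) ℤ) :
      Matrix (Fin 2) (Fin 2) ℤ) 0 1) :
    q = (Int.gcd (C 0 0) (C 1 0) : ℤ) ∧
    ∀ r s : ℤ, (C 0 0 / q) * r + (C 1 0 / q) * s = 1 →
      (β / q) ∣ (C 0 1 * r + C 1 1 * s + p) := by
  set v00 := (V : Matrix (Fin 2) (Fin 2) ℤ) 0 0 with hv00
  set v01 := (V : Matrix (Fin 2) (Fin 2) ℤ) 0 1 with hv01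
  set v10 := (V : Matrix (Fin 2) (Fin 2) ℤ) 1 0 with hv10
  set v11 := (V : Matrix (Fin 2) (Fin 2) ℤ) 1 1 with hv11
  have hVdet : v00 * v11 - v01 * v10 = 1 := by
    have := V.2; rwa [Matrix.det_fin_two] at this
  have hcos : β ∣ q * v01 - p * v11 := by
    have h := hcoset
    rw [Matrix.SpecialLinearGroup.coe_mul, Matrix.SpecialLinearGroup.coe_inv,
      Matrix.adjugate_fin_two] at h
    simp [Matrix.mul_apply, Fin.sum_univ_two, hγ₀p, hγ₀q] at h
    simpa [sub_eq_add_neg] using h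
  set A := ((↑(U⁻¹) : Matrix (Fin 2) (Fin 2) ℤ)) with hA
  have hAU : A * (↑U : Matrix (Fin 2) (Fin 2) ℤ) = 1 := by
    rw [hA]; exact U.inv_mul
  have hWmat : ((V⁻¹ : Matrix.SpecialLinearGroup (Fin 2) ℤ) : Matrix (Fin 2) (Fin 2) ℤ)
      = !![v11, -v01; -v10, v00] := by
    rw [Matrix.SpecialLinearGroup.coe_inv, Matrix.adjugate_fin_two]
  have hVW : (↑V : Matrix (Fin 2) (Fin 2) ℤ) *
      ((V⁻¹ : Matrix.SpecialLinearGroup (Fin 2) ℤ) : Matrix (Fin 2) (Fin 2) ℤ) = 1 := by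
    rw [← Matrix.SpecialLinearGroup.coe_mul, mul_inv_cancel]
    rfl
  have hC : C = A * (Matrix.diagonal ![1, β] *
      ((V⁻¹ : Matrix.SpecialLinearGroup (Fin 2) ℤ) : Matrix (Fin 2) (Fin 2) ℤ)) := by
    calc C = (A * ↑U) * C * ((↑V : Matrix (Fin 2) (Fin 2) ℤ) *
          ((V⁻¹ : Matrix.SpecialLinearGroup (Fin 2) ℤ) : Matrix (Fin 2) (Fin 2) ℤ)) := by
          rw [hAU, hVW]; simp
      _ = A * ((↑U : Matrix (Fin 2) (Fin 2) ℤ) * C * ↑V) *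
          ((V⁻¹ : Matrix.SpecialLinearGroup (Fin 2) ℤ) : Matrix (Fin 2) (Fin 2) ℤ) := by
          noncomm_ring
      _ = _ := by rw [hsmith]; noncomm_ring
  have hUC : (↑U : Matrix (Fin 2) (Fin 2) ℤ) * C = Matrix.diagonal ![1, β] *
      ((V⁻¹ : Matrix.SpecialLinearGroup (Fin 2) ℤ) : Matrix (Fin 2) (Fin 2) ℤ) := by
    calc (↑U : Matrix (Fin 2) (Fin 2) ℤ) * C
        = ((↑U : Matrix (Fin 2) (Fin 2) ℤ) * C * ↑V) *
          ((V⁻¹ : Matrix.SpecialLinearGroup (Fin 2) ℤ) : Matrix (Fin 2) (Fin 2) ℤ) := by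
          rw [Matrix.mul_assoc, hVW]; simp
      _ = _ := by rw [hsmith]
  rw [hWmat] at hC hUC
  have e00 : C 0 0 = A 0 0 * v11 + A 0 1 * (-(β * v10)) := by
    rw [hC]; simp [Matrix.mul_apply, Fin.sum_univ_two, Matrix.diagonal]
  have e10 : C 1 0 = A 1 0 * v11 + A 1 1 * (-(β * v10)) := by
    rw [hC]; simp [Matrix.mul_apply, Fin.sum_univ_two, Matrix.diagonal]
  have e01 : C 0 1 = A 0 0 * (-v01) + A 0 1 * (β * v00) := by
    rw [hC]; simp [Matrix.mul_apply, Fin.sum_univ_two, Matrix.diagonal]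
  have e11 : C 1 1 = A 1 0 * (-v01) + A 1 1 * (β * v00) := by
    rw [hC]; simp [Matrix.mul_apply, Fin.sum_univ_two, Matrix.diagonal]
  have f0 : (↑U : Matrix (Fin 2) (Fin 2) ℤ) 0 0 * C 0 0 +
      (↑U : Matrix (Fin 2) (Fin 2) ℤ) 0 1 * C 1 0 = v11 := by
    have := congrFun (congrFun hUC 0) 0
    simpa [Matrix.mul_apply, Fin.sum_univ_two, Matrix.diagonal] using this
  have f1 : (↑U : Matrix (Fin 2) (Fin 2) ℤ) 1 0 * C 0 0 +
      (↑U : Matrix (Fin 2) (Fin 2) ℤ) 1 1 * C 1 0 = -(β * v10) := by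
    have := congrFun (congrFun hUC 1) 0
    simp [Matrix.mul_apply, Fin.sum_univ_two, Matrix.diagonal] at this
    linarith
  -- scalar reasoning
  have hqv11 : q ∣ v11 := by
    have h2 : q ∣ q * v01 - p * v11 := hqβ.trans hcos
    have h1 : q ∣ p * v11 := by
      have := dvd_sub (dvd_mul_right q v01) h2
      simpa using this
    exact hpq.symm.dvd_of_dvd_mul_left h1
  have hqC00 : q ∣ C 0 0 := by
    rw [e00]
    exact dvd_add (hqv11.mul_left _) (((hqβ.mul_right v10).neg_right).mul_left _)
  have hqC10 : q ∣ C 1 0 := by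
    rw [e10]
    exact dvd_add (hqv11.mul_left _) (((hqβ.mul_right v10).neg_right).mul_left _)
  obtain ⟨m, hm⟩ := hqβ
  have hβq : β / q = m := by rw [hm, Int.mul_ediv_cancel_left _ hq.ne']
  obtain ⟨t, ht⟩ := hqv11
  constructor
  · -- q = gcd
    have hg00 : ((Int.gcd (C 0 0) (C 1 0) : ℤ)) ∣ C 0 0 := Int.gcd_dvd_left _ _
    have hg10 : ((Int.gcd (C 0 0) (C 1 0) : ℤ)) ∣ C 1 0 := Int.gcd_dvd_right _ _
    have hgv11 : ((Int.gcd (C 0 0) (C 1 0) : ℤ)) ∣ v11 := by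
      rw [← f0]; exact dvd_add (hg00.mul_left _) (hg10.mul_left _)
    have hgβv10 : ((Int.gcd (C 0 0) (C 1 0) : ℤ)) ∣ β * v10 := by
      have : ((Int.gcd (C 0 0) (C 1 0) : ℤ)) ∣ -(β * v10) := by
        rw [← f1]; exact dvd_add (hg00.mul_left _) (hg10.mul_left _)
      simpa using this
    have cop1 : IsCoprime v11 v10 := ⟨v00, -v01, by linear_combination hVdet⟩
    have cop2 : IsCoprime ((Int.gcd (C 0 0) (C 1 0) : ℤ)) v10 :=
      cop1.of_isCoprime_of_dvd_left hgv11
    have hgβ : ((Int.gcd (C 0 0) (C 1 0) : ℤ)) ∣ β := cop2.dvd_of_dvd_mul_right hgβv10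
    have hgqv01 : ((Int.gcd (C 0 0) (C 1 0) : ℤ)) ∣ q * v01 := by
      have := dvd_add (hgβ.trans hcos) (hgv11.mul_left p)
      simpa using this
    have cop3 : IsCoprime v11 v01 := ⟨v00, -v10, by linear_combination hVdet⟩
    have cop4 : IsCoprime ((Int.gcd (C 0 0) (C 1 0) : ℤ)) v01 :=
      cop3.of_isCoprime_of_dvd_left hgv11
    have hgq : ((Int.gcd (C 0 0) (C 1 0) : ℤ)) ∣ q := cop4.dvd_of_dvd_mul_right hgqv01
    exact Int.dvd_antisymm hq.le (Int.natCast_nonneg _) (Int.dvd_coe_gcd hqC00 hqC10) hgq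
  · intro r s hrs
    rw [hβq]
    obtain ⟨c0, hc0⟩ := hqC00
    obtain ⟨c1, hc1⟩ := hqC10
    rw [hc0, hc1, Int.mul_ediv_cancel_left _ hq.ne', Int.mul_ediv_cancel_left _ hq.ne'] at hrs
    have hrsq : C 0 0 * r + C 1 0 * s = q := by
      rw [hc0, hc1]; linear_combination q * hrs
    rw [e00, e10] at hrsq
    have hta : t * (A 0 0 * r + A 1 0 * s) - m * v10 * (A 0 1 * r + A 1 1 * s) = 1 := by
      apply mul_left_cancel₀ hq.ne'
      rw [mul_one]
      linear_combination hrsq - (A 0 0 * r + A 1 0 * s) * ht + (v10 * (A 0 1 * r + A 1 1 * s)) * hm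
    obtain ⟨k, hk⟩ := hcos
    have hk' : v01 = p * t + m * k := by
      apply mul_left_cancel₀ hq.ne'
      linear_combination hk + p * ht + k * hm
    refine ⟨q * v00 * (A 0 1 * r + A 1 1 * s) - k * (A 0 0 * r + A 1 0 * s)
      - p * v10 * (A 0 1 * r + A 1 1 * s), ?_⟩
    rw [e01, e11]
    linear_combination (v00 * (A 0 1 * r + A 1 1 * s)) * hm
      - (A 0 0 * r + A 1 0 * s) * hk' - p * hta
end

section
/- For every ε > 0 there exists C(ε) such that for all integers d ≥ 1 and reals X ≥ 1, ∑_{1 ≤ n ≤ X} gcd(d, n²)/n ≤ C(ε)·(X·d)^ε·∏_{p^j ∥ d} p^{⌊j/2⌋}, where the product is over primes p with p^j exactly dividing d. -/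
open Finset Real


private lemma factM {d : ℕ} (hd : d ≠ 0) (q : ℕ) :
    (∏ p ∈ d.primeFactors, p ^ (d.factorization p / 2)).factorization q
      = d.factorization q / 2 := by
  rw [Nat.factorization_prod (fun p hp => pow_ne_zero _ (Nat.pos_of_mem_primeFactors hp).ne')]
  rw [Finset.sum_apply']
  have : ∀ p ∈ d.primeFactors,
      (p ^ (d.factorization p / 2)).factorization q
        = if p = q then d.factorization p / 2 else 0 := by
    intro p hp
    rw [(Nat.prime_of_mem_primeFactors hp).factorization_pow, Finsupp.single_apply]
  rw [Finset.sum_congr rfl this, Finset.sum_ite_eq' d.primeFactors q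
    (fun p => d.factorization p / 2)]
  split_ifs with h
  · rfl
  · have h0 : d.factorization q = 0 :=
      Finsupp.notMem_support_iff.mp (by rwa [Nat.support_factorization])
    simp [h0]

private lemma gcd_sq_dvd {d n : ℕ} (hd : d ≠ 0) (hn : n ≠ 0) :
    Nat.gcd d (n ^ 2) ∣ (∏ p ∈ d.primeFactors, p ^ (d.factorization p / 2)) * Nat.gcd d n := by
  have hM : (∏ p ∈ d.primeFactors, p ^ (d.factorization p / 2)) ≠ 0 :=
    Finset.prod_ne_zero_iff.2 fun p hp => pow_ne_zero _ (Nat.pos_of_mem_primeFactors hp).ne'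
  have hg2 : Nat.gcd d (n ^ 2) ≠ 0 := Nat.gcd_ne_zero_left hd
  have hg : Nat.gcd d n ≠ 0 := Nat.gcd_ne_zero_left hd
  rw [← Nat.factorization_le_iff_dvd hg2 (mul_ne_zero hM hg)]
  intro q
  rw [Nat.factorization_gcd hd (pow_ne_zero _ hn), Nat.factorization_mul hM hg,
    Nat.factorization_gcd hd hn, Nat.factorization_pow]
  simp only [Finsupp.inf_apply, Finsupp.add_apply, Finsupp.smul_apply, smul_eq_mul, factM hd]
  omega


private lemma keyexp (ε : ℝ) (hε : 0 < ε) (j : ℕ) :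
    (j + 1 : ℝ) ≤ Real.exp (1 / (ε * Real.log 2)) * ((2:ℝ) ^ j) ^ ε := by
  set c : ℝ := ε * Real.log 2 with hc
  have hc0 : 0 < c := mul_pos hε (Real.log_pos one_lt_two)
  have h1 : ((2:ℝ) ^ j) ^ ε = Real.exp (c * j) := by
    rw [← Real.rpow_natCast 2 j, ← Real.rpow_mul (by norm_num),
      Real.rpow_def_of_pos (by norm_num)]
    rw [hc]
    ring_nf
  rw [h1, ← Real.exp_add]
  set x : ℝ := Real.sqrt j with hx
  have hx0 : 0 ≤ x := Real.sqrt_nonneg _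
  have hx2 : x ^ 2 = (j : ℝ) := Real.sq_sqrt (Nat.cast_nonneg j)
  have h2 : 2 * x ≤ 1 / c + c * j := by
    rw [← hx2]
    have := sq_nonneg (c * x - 1)
    rw [div_add' _ _ _ hc0.ne', le_div_iff₀ hc0]
    nlinarith
  have h3 : (j + 1 : ℝ) ≤ Real.exp (2 * x) := by
    have he := Real.add_one_le_exp x
    have hp : 0 < Real.exp x := Real.exp_pos x
    rw [two_mul, Real.exp_add]
    nlinarith
  exact h3.trans (Real.exp_le_exp.2 h2)

private lemma tau_bound (ε : ℝ) (hε : 0 < ε) (d : ℕ) (hd : d ≠ 0) :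
    (d.divisors.card : ℝ) ≤
      Real.exp (1 / (ε * Real.log 2)) ^ (⌈(2:ℝ) ^ (1/ε)⌉₊ + 1) * (d : ℝ) ^ ε := by
  set K : ℝ := Real.exp (1 / (ε * Real.log 2)) with hK
  have hK1 : 1 ≤ K := Real.one_le_exp (by positivity)
  set B : ℕ := ⌈(2:ℝ) ^ (1/ε)⌉₊ with hB
  -- card divisors as a product
  have hcard : (d.divisors.card : ℝ) = ∏ p ∈ d.primeFactors, ((d.factorization p + 1 : ℕ) : ℝ) := by
    rw [Nat.card_divisors hd]
    push_cast
    rfl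
  -- termwise bound
  have hterm : ∀ p ∈ d.primeFactors,
      ((d.factorization p + 1 : ℕ) : ℝ) ≤
        (if p ≤ B then K else 1) * ((p ^ d.factorization p : ℕ) : ℝ) ^ ε := by
    intro p hp
    have hp2 : 2 ≤ p := (Nat.prime_of_mem_primeFactors hp).two_le
    set j : ℕ := d.factorization p
    push_cast
    split_ifs with hpB
    · calc (j + 1 : ℝ) ≤ K * ((2:ℝ) ^ j) ^ ε := keyexp ε hε j
        _ ≤ K * ((p:ℝ) ^ j) ^ ε := by
            gcongr
            exact_mod_cast hp2
    · -- p > B, so (p:ℝ) ≥ 2 ^ (1/ε), hence (p^j)^ε ≥ 2^j ≥ j+1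
      have hpB' : ((2:ℝ) ^ (1/ε)) ≤ (p : ℝ) := by
        have : (B : ℝ) ≤ (p : ℝ) := by exact_mod_cast Nat.le_of_lt (Nat.lt_of_not_le hpB)
        exact le_trans (Nat.le_ceil _) this
      have hpε : (2:ℝ) ≤ (p:ℝ) ^ ε := by
        have h2 : ((2:ℝ) ^ (1/ε)) ^ ε = 2 := by
          rw [← Real.rpow_mul (by norm_num), one_div_mul_cancel hε.ne', Real.rpow_one]
        calc (2:ℝ) = ((2:ℝ) ^ (1/ε)) ^ ε := h2.symm
          _ ≤ (p:ℝ) ^ ε := Real.rpow_le_rpow (by positivity) hpB' hε.le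
      have hje : ((p:ℝ) ^ j) ^ ε = ((p:ℝ) ^ ε) ^ j := by
        rw [← Real.rpow_natCast (p:ℝ) j, ← Real.rpow_natCast ((p:ℝ) ^ ε) j,
          ← Real.rpow_mul (by positivity), ← Real.rpow_mul (by positivity), mul_comm]
      have h2j : (j + 1 : ℝ) ≤ (2:ℝ) ^ j := by
        exact_mod_cast Nat.succ_le_of_lt ((Nat.lt_two_pow_self (n := j)))
      rw [one_mul, hje]
      calc (j + 1 : ℝ) ≤ (2:ℝ) ^ j := h2j
        _ ≤ ((p:ℝ) ^ ε) ^ j := by gcongr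
  calc (d.divisors.card : ℝ)
      ≤ ∏ p ∈ d.primeFactors, ((if p ≤ B then K else 1) * ((p ^ d.factorization p : ℕ) : ℝ) ^ ε) := by
        rw [hcard]; exact Finset.prod_le_prod (fun p _ => by positivity) hterm
    _ = (∏ p ∈ d.primeFactors, (if p ≤ B then K else 1))
        * ∏ p ∈ d.primeFactors, ((p ^ d.factorization p : ℕ) : ℝ) ^ ε := Finset.prod_mul_distrib
    _ ≤ K ^ (B + 1) * (d : ℝ) ^ ε := by
        have hprod2 : ∏ p ∈ d.primeFactors, ((p ^ d.factorization p : ℕ) : ℝ) ^ ε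
            = (d : ℝ) ^ ε := by
          rw [Real.finset_prod_rpow _ _ (fun p _ => by positivity) ε]
          congr 1
          rw [← Nat.cast_prod]
          congr 1
          conv_rhs => rw [← Nat.factorization_prod_pow_eq_self hd]
          rfl
        rw [hprod2]
        apply mul_le_mul_of_nonneg_right ?_ (by positivity)
        calc ∏ p ∈ d.primeFactors, (if p ≤ B then K else 1)
            ≤ ∏ p ∈ d.primeFactors.filter (· ≤ B), K := by
              rw [← Finset.prod_filter_mul_prod_filter_not d.primeFactors (· ≤ B)]
              have h1 : ∏ p ∈ d.primeFactors.filter (· ≤ B), (if p ≤ B then K else 1)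
                  = ∏ p ∈ d.primeFactors.filter (· ≤ B), K :=
                Finset.prod_congr rfl fun p hp => if_pos (Finset.mem_filter.1 hp).2
              have h2 : ∏ p ∈ d.primeFactors.filter (¬ · ≤ B), (if p ≤ B then K else 1) = 1 :=
                Finset.prod_eq_one fun p hp => if_neg (Finset.mem_filter.1 hp).2
              rw [h1, h2, mul_one]
          _ = K ^ (d.primeFactors.filter (· ≤ B)).card := Finset.prod_const K
          _ ≤ K ^ (B + 1) := by
              apply pow_le_pow_right₀ hK1
              have : d.primeFactors.filter (· ≤ B) ⊆ Finset.range (B + 1) := fun p hp =>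
                Finset.mem_range.2 (Nat.lt_succ_of_le (Finset.mem_filter.1 hp).2)
              simpa using Finset.card_le_card this


private lemma harm_le (N : ℕ) : ∑ k ∈ Finset.Icc 1 N, 1/(k:ℝ) ≤ 1 + Real.log N := by
  have h1 : ∑ k ∈ Finset.Icc 1 N, 1/(k:ℝ) = ((harmonic N : ℚ) : ℝ) := by
    rw [harmonic_eq_sum_Icc]
    push_cast
    simp [one_div]
  rw [h1]
  exact harmonic_le_one_add_log N

private lemma Te (N e : ℕ) (he : 1 ≤ e) :
    ∑ n ∈ Finset.Icc 1 N, (if e ∣ n then (e:ℝ)/n else 0) ≤ ∑ k ∈ Finset.Icc 1 N, 1/(k:ℝ) := by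
  have he0 : 0 < e := he
  rw [← Finset.sum_filter]
  have heq : ∑ n ∈ (Finset.Icc 1 N).filter (e ∣ ·), (e:ℝ)/n
      = ∑ k ∈ Finset.Icc 1 (N/e), 1/(k:ℝ) := by
    refine Finset.sum_nbij' (i := fun n => n / e) (j := fun k => e * k) ?_ ?_ ?_ ?_ ?_
    · intro n hn
      simp only [Finset.mem_filter, Finset.mem_Icc] at hn
      obtain ⟨⟨h1n, hnN⟩, hdvd⟩ := hn
      simp only [Finset.mem_Icc]
      refine ⟨?_, Nat.div_le_div_right hnN⟩
      rw [Nat.le_div_iff_mul_le he0, one_mul]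
      exact Nat.le_of_dvd h1n hdvd
    · intro k hk
      simp only [Finset.mem_Icc] at hk
      simp only [Finset.mem_filter, Finset.mem_Icc]
      refine ⟨⟨Nat.mul_pos he0 hk.1, ?_⟩, dvd_mul_right e k⟩
      rw [mul_comm]
      exact (Nat.le_div_iff_mul_le he0).1 hk.2
    · intro n hn
      simp only [Finset.mem_filter] at hn
      exact Nat.mul_div_cancel' hn.2
    · intro k _
      exact Nat.mul_div_cancel_left k he0
    · intro n hn
      simp only [Finset.mem_filter, Finset.mem_Icc] at hn
      rw [Nat.cast_div hn.2 (by exact_mod_cast he0.ne')]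
      rw [one_div_div]
  rw [heq]
  apply Finset.sum_le_sum_of_subset_of_nonneg
  · exact Finset.Icc_subset_Icc le_rfl (Nat.div_le_self N e)
  · intro k _ _
    positivity


private lemma onelog (ε X : ℝ) (hε : 0 < ε) (hX : 1 ≤ X) :
    1 + Real.log X ≤ (1 + 1/ε) * X ^ ε := by
  have hX0 : (0:ℝ) < X := lt_of_lt_of_le one_pos hX
  have hXε : (1:ℝ) ≤ X ^ ε := by
    calc (1:ℝ) = (1:ℝ) ^ ε := (Real.one_rpow ε).symm
      _ ≤ X ^ ε := Real.rpow_le_rpow zero_le_one hX hε.le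
  have hlog : ε * Real.log X ≤ X ^ ε := by
    rw [← Real.log_rpow hX0]
    have := Real.log_le_sub_one_of_pos (x := X ^ ε) (by positivity)
    linarith
  have : Real.log X ≤ X ^ ε / ε := by
    rw [le_div_iff₀ hε, mul_comm]
    exact hlog
  have h2 : (1 + 1/ε) * X ^ ε = X ^ ε + X ^ ε / ε := by ring
  linarith

theorem stmt7 : ∀ ε : ℝ, 0 < ε → ∃ Cst : ℝ, 0 < Cst ∧
    ∀ d : ℕ, 1 ≤ d → ∀ X : ℝ, 1 ≤ X →
      ∑ n ∈ Finset.Icc 1 ⌊X⌋₊, (Nat.gcd d (n ^ 2) : ℝ) / (n : ℝ) ≤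
        Cst * (X * (d : ℝ)) ^ ε *
          ∏ p ∈ d.primeFactors, (p : ℝ) ^ (d.factorization p / 2) := by
  intro ε hε
  set K : ℝ := Real.exp (1 / (ε * Real.log 2)) with hK
  set B : ℕ := ⌈(2:ℝ) ^ (1/ε)⌉₊ with hB
  refine ⟨K ^ (B + 1) * (1 + 1/ε), by positivity, ?_⟩
  intro d hd X hX
  have hd0 : d ≠ 0 := by omega
  have hX0 : (0:ℝ) < X := lt_of_lt_of_le one_pos hX
  set N : ℕ := ⌊X⌋₊ with hN
  set m : ℕ := ∏ p ∈ d.primeFactors, p ^ (d.factorization p / 2) with hm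
  have hm0 : 0 < m :=
    Finset.prod_pos fun p hp => pow_pos (Nat.pos_of_mem_primeFactors hp) _
  set H : ℝ := ∑ k ∈ Finset.Icc 1 N, 1/(k:ℝ) with hH
  have hH0 : 0 ≤ H := Finset.sum_nonneg fun k _ => by positivity
  -- step 1 : pointwise gcd bound and divisor-sum bound
  have step1 : ∑ n ∈ Finset.Icc 1 N, (Nat.gcd d (n ^ 2) : ℝ) / (n : ℝ) ≤
      (m : ℝ) * ∑ e ∈ d.divisors, ∑ n ∈ Finset.Icc 1 N, (if e ∣ n then (e:ℝ)/n else 0) := by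
    rw [← Finset.sum_comm, Finset.mul_sum]
    apply Finset.sum_le_sum
    intro n hn
    have hn1 : 1 ≤ n := (Finset.mem_Icc.1 hn).1
    have hn0 : (0:ℝ) < (n:ℝ) := by exact_mod_cast hn1
    have hgcd : (Nat.gcd d (n ^ 2) : ℝ) ≤ (m : ℝ) * (Nat.gcd d n : ℝ) := by
      have := Nat.le_of_dvd (Nat.mul_pos hm0 (Nat.gcd_pos_of_pos_left n (by omega))
        |>.trans_le le_rfl) (gcd_sq_dvd hd0 (by omega))
      exact_mod_cast this
    have hsum : (Nat.gcd d n : ℝ) ≤ ∑ e ∈ d.divisors, (if e ∣ n then (e:ℝ) else 0) := by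
      have hmem : Nat.gcd d n ∈ d.divisors :=
        Nat.mem_divisors.2 ⟨Nat.gcd_dvd_left d n, hd0⟩
      have := Finset.single_le_sum (f := fun e => if e ∣ n then (e:ℝ) else 0)
        (fun e _ => by positivity) hmem
      simpa [Nat.gcd_dvd_right d n] using this
    calc (Nat.gcd d (n ^ 2) : ℝ) / (n : ℝ) ≤ ((m : ℝ) * (Nat.gcd d n : ℝ)) / n := by gcongr
      _ = (m:ℝ) * ((Nat.gcd d n : ℝ) / n) := by ring
      _ ≤ (m:ℝ) * ((∑ e ∈ d.divisors, (if e ∣ n then (e:ℝ) else 0)) / n) := by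
          gcongr
      _ = (m:ℝ) * ∑ e ∈ d.divisors, (if e ∣ n then (e:ℝ)/n else 0) := by
          rw [Finset.sum_div]
          congr 1
          refine Finset.sum_congr rfl fun e _ => ?_
          split_ifs <;> simp
  -- step 2 : bound each inner sum by H
  have step2 : ∑ e ∈ d.divisors, ∑ n ∈ Finset.Icc 1 N, (if e ∣ n then (e:ℝ)/n else 0)
      ≤ (d.divisors.card : ℝ) * H := by
    rw [← nsmul_eq_mul, ← Finset.sum_const]
    apply Finset.sum_le_sum
    intro e he
    exact Te N e (Nat.pos_of_mem_divisors he)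
  -- step 3 : H bound
  have step3 : H ≤ (1 + 1/ε) * X ^ ε := by
    have h1 : H ≤ 1 + Real.log N := harm_le N
    have h2 : Real.log N ≤ Real.log X := by
      rcases Nat.eq_zero_or_pos N with h | h
      · simp only [h, Nat.cast_zero, Real.log_zero]
        exact Real.log_nonneg hX
      · apply Real.log_le_log (by exact_mod_cast h)
        exact Nat.floor_le hX0.le
    linarith [onelog ε X hε hX]
  have hτ := tau_bound ε hε d hd0
  have hτ0 : (0:ℝ) ≤ (d.divisors.card : ℝ) := Nat.cast_nonneg _
  -- combine
  have hprod : (∏ p ∈ d.primeFactors, (p : ℝ) ^ (d.factorization p / 2)) = (m : ℝ) := by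
    rw [hm]; push_cast; rfl
  rw [hprod]
  calc ∑ n ∈ Finset.Icc 1 N, (Nat.gcd d (n ^ 2) : ℝ) / (n : ℝ)
      ≤ (m : ℝ) * ((d.divisors.card : ℝ) * H) := by
        exact step1.trans (mul_le_mul_of_nonneg_left step2 (Nat.cast_nonneg m))
      _ ≤ (m : ℝ) * ((K ^ (B + 1) * (d:ℝ) ^ ε) * ((1 + 1/ε) * X ^ ε)) := by
        gcongr
      _ = K ^ (B + 1) * (1 + 1/ε) * ((X:ℝ) ^ ε * (d:ℝ) ^ ε) * (m:ℝ) := by ring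
      _ = K ^ (B + 1) * (1 + 1/ε) * (X * (d:ℝ)) ^ ε * (m:ℝ) := by
        rw [Real.mul_rpow hX0.le (Nat.cast_nonneg d)]
end
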